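/- arXiv:2503.07386 — 2 statements merged into one kernel-verified Lean document; each statement's English description precedes it below -/
import Mathlib

section
/- Let p ≥ 3 and s ≥ p be integers with s − p + 1 = c(p−1) + d, 0 ≤ d ≤ p−2, and let n be sufficiently large. The graph G_4 defined as K_1 ∨ (K_{p−2} ∨ I_{n−p+1−c(2p−2)} ∪ c·K_{2p−2}) when d = 0, and K_1 ∨ (K_{p−2} ∨ I_{n−p−c(2p−2)−2d} ∪ c·K_{2p−2} ∪ K_{2d+1}) when d ≠ 0, contains no cycle of length at least 2p and no matching of size s+1. -/
/-- The join of two graphs: all edges between the two sides are added. -/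
def graphJoin {α β : Type*} (G : SimpleGraph α) (H : SimpleGraph β) : SimpleGraph (α ⊕ β) where
  Adj x y := match x, y with
    | Sum.inl a, Sum.inl b => G.Adj a b
    | Sum.inr a, Sum.inr b => H.Adj a b
    | _, _ => True
  symm := ⟨by rintro (a | a) (b | b) h <;> first | exact h.symm | trivial⟩
  loopless := ⟨by rintro (a | a) h <;> exact (SimpleGraph.irrefl _) h⟩

/-- The disjoint union of `a` copies of the complete graph `K_m`. -/
def multiK (a m : ℕ) : SimpleGraph (Fin a × Fin m) where
  Adj x y := x.1 = y.1 ∧ x.2 ≠ y.2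
  symm := ⟨by rintro x y ⟨h1, h2⟩; exact ⟨h1.symm, h2.symm⟩⟩
  loopless := ⟨by rintro x ⟨h1, h2⟩; exact h2 rfl⟩

/-- `G` has no cycle of length at least `k`. -/
def NoLongCycle {α : Type*} (G : SimpleGraph α) (k : ℕ) : Prop :=
  ¬ ∃ (a : α) (c : G.Walk a a), c.IsCycle ∧ k ≤ c.length

/-- `G` has no matching consisting of `m` pairwise disjoint edges. -/
def NoMatchingOfSize {α : Type*} (G : SimpleGraph α) (m : ℕ) : Prop :=
  ∀ M : G.Subgraph, M.IsMatching → M.verts.ncard < 2 * m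

/-- `G₄ = K₁ ∨ (K_{p-2} ∨ I_{n-p+1-c(2p-2)} ∪ c K_{2p-2})` (the case `d = 0`). -/
def G4zero (p c n : ℕ) :
    SimpleGraph (Fin 1 ⊕ ((Fin (p - 2) ⊕ Fin (n - p + 1 - c * (2 * p - 2))) ⊕
      (Fin c × Fin (2 * p - 2)))) :=
  graphJoin (⊤ : SimpleGraph (Fin 1))
    ((graphJoin (⊤ : SimpleGraph (Fin (p - 2)))
        (⊥ : SimpleGraph (Fin (n - p + 1 - c * (2 * p - 2))))) ⊕g (multiK c (2 * p - 2)))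

/-- `G₄ = K₁ ∨ (K_{p-2} ∨ I_{n-p-c(2p-2)-2d} ∪ c K_{2p-2} ∪ K_{2d+1})` (the case `d ≠ 0`). -/
def G4pos (p c d n : ℕ) :
    SimpleGraph (Fin 1 ⊕ ((Fin (p - 2) ⊕ Fin (n - p - c * (2 * p - 2) - 2 * d)) ⊕
      ((Fin c × Fin (2 * p - 2)) ⊕ Fin (2 * d + 1)))) :=
  graphJoin (⊤ : SimpleGraph (Fin 1))
    ((graphJoin (⊤ : SimpleGraph (Fin (p - 2)))
        (⊥ : SimpleGraph (Fin (n - p - c * (2 * p - 2) - 2 * d)))) ⊕g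
      ((multiK c (2 * p - 2)) ⊕g (⊤ : SimpleGraph (Fin (2 * d + 1)))))

/-!
Removing the apex `K₁` from a cycle leaves a path in `K_{p-2} ∨ I ∪ c·K_{2p-2} (∪ K_{2d+1})`.
A path stays inside one component, and there it has at most `2p - 2` vertices: in `K_{p-2} ∨ I`
no two consecutive vertices are independent, so at most `2(p-2) + 1`. Hence every cycle has
length at most `2p - 1`.

In a matching, the vertices of `I` can only be matched into the `p - 1` vertices of
`K₁ ∨ K_{p-2}`, so at most `2(p-1) + c(2p-2) (+ 2d+1) ≤ 2s + 1` vertices are covered.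
-/

open SimpleGraph

namespace List

variable {α β : Type*}

theorem IsChain.length_le_two_mul_countP_add_one (P : α → Bool) :
    ∀ {l : List α}, l.IsChain (fun a b => P a ∨ P b) → l.length ≤ 2 * l.countP P + 1
  | [], _ => by simp
  | [a], _ => by by_cases h : P a <;> simp [h]
  | a :: b :: t, h => by
    obtain ⟨hab, hbt⟩ := isChain_cons_cons.mp h
    rcases hab with ha | hb
    · have := length_le_two_mul_countP_add_one P hbt
      simp only [countP_cons, length_cons, ha, if_true] at *
      omega
    · have := length_le_two_mul_countP_add_one P (l := t) hbt.tail
      simp only [countP_cons, length_cons, hb, if_true] at *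
      split_ifs <;> omega

theorem IsChain.forall_mem_eq_head {R : α → α → Prop} {f : α → β}
    (hR : ∀ a b, R a b → f a = f b) {x : α} {t : List α} (h : (x :: t).IsChain R) :
    ∀ y ∈ x :: t, f y = f x :=
  h.induction (fun y => f y = f x) _ (fun _ _ hyz hy => (hR _ _ hyz).symm.trans hy) fun _ => rfl

end List

/-- Paths are encoded as duplicate-free lists of vertices with consecutive entries adjacent. -/
def PathVertsLE {V : Type*} (G : SimpleGraph V) (k : ℕ) : Prop :=
  ∀ l : List V, l.IsChain G.Adj → l.Nodup → l.length ≤ k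

section PathVertsLE

variable {α V W : Type*} {G : SimpleGraph V} {H : SimpleGraph W} {k m : ℕ}

theorem PathVertsLE.mono (h : PathVertsLE G k) (hkm : k ≤ m) : PathVertsLE G m :=
  fun l hc hnd => (h l hc hnd).trans hkm

theorem PathVertsLE.length_le_of_forall_mem_range (hH : PathVertsLE H k) {f : W → V}
    (hf : ∀ a b, G.Adj (f a) (f b) → H.Adj a b) {l : List V} (hc : l.IsChain G.Adj)
    (hnd : l.Nodup) (hl : ∀ x ∈ l, x ∈ Set.range f) : l.length ≤ k := by
  obtain ⟨l', rfl⟩ : l ∈ Set.range (List.map f) := Set.range_list_map f ▸ hl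
  simpa using hH l' (((List.isChain_map f).mp hc).imp hf) (hnd.of_map f)

theorem pathVertsLE_card [Fintype V] (G : SimpleGraph V) : PathVertsLE G (Fintype.card V) :=
  fun _ _ hnd => hnd.length_le_card

theorem PathVertsLE.sum {a b : ℕ} (hG : PathVertsLE G a) (hH : PathVertsLE H b) :
    PathVertsLE (G ⊕g H) (max a b) := by
  rintro (_ | ⟨x, t⟩) hc hnd
  · simp
  have hside := hc.forall_mem_eq_head (f := Sum.isLeft) (by rintro (_ | _) (_ | _) h <;> simp_all)
  cases x with
  | inl =>
    refine le_max_of_le_left (hG.length_le_of_forall_mem_range (fun _ _ => sum_adj_inl.mp)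
      hc hnd fun y hy => ?_)
    obtain ⟨a, rfl⟩ := Sum.isLeft_iff.mp (by simpa using hside y hy)
    exact Set.mem_range_self a
  | inr =>
    refine le_max_of_le_right (hH.length_le_of_forall_mem_range (fun _ _ => sum_adj_inr.mp)
      hc hnd fun y hy => ?_)
    obtain ⟨b, rfl⟩ := Sum.isRight_iff.mp (by simpa using hside y hy)
    exact Set.mem_range_self b

theorem pathVertsLE_multiK (c m : ℕ) : PathVertsLE (multiK c m) m := by
  rintro (_ | ⟨x, t⟩) hc hnd
  · simp
  have hfst := hc.forall_mem_eq_head (f := Prod.fst) fun _ _ h => h.1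
  simpa using (pathVertsLE_card (⊤ : SimpleGraph (Fin m))).length_le_of_forall_mem_range
    (G := multiK c m) (f := fun j => (x.1, j)) (fun _ _ h => h.2) hc hnd
    fun y hy => ⟨y.2, Prod.ext (hfst y hy).symm rfl⟩

theorem pathVertsLE_graphJoin_bot [Fintype α] (G : SimpleGraph α) (β : Type*) :
    PathVertsLE (graphJoin G (⊥ : SimpleGraph β)) (2 * Fintype.card α + 1) := by
  intro l hc hnd
  have hlen := List.IsChain.length_le_two_mul_countP_add_one Sum.isLeft
    (hc.imp (by rintro (_ | _) (_ | _) h <;> simp_all [graphJoin]))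
  have hcount : l.countP Sum.isLeft ≤ Fintype.card α := by
    rw [List.countP_eq_length_filter]
    obtain ⟨l', hl'⟩ : l.filter Sum.isLeft ∈ Set.range (List.map Sum.inl) :=
      Set.range_list_map _ ▸ fun x hx => by
        obtain ⟨a, rfl⟩ := Sum.isLeft_iff.mp (List.of_mem_filter hx)
        exact Set.mem_range_self a
    have hnd' : l'.Nodup := (hl' ▸ hnd.filter _).of_map _
    simpa [← hl'] using hnd'.length_le_card
  omega

end PathVertsLE

theorem SimpleGraph.Walk.IsCycle.exists_path_omitting_base {V : Type*} {G : SimpleGraph V}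
    {u : V} {c : G.Walk u u} (hc : c.IsCycle) :
    ∃ l : List V, l.IsChain G.Adj ∧ l.Nodup ∧ u ∉ l ∧ l.length + 1 = c.length ∧
      l.Sublist c.support := by
  have hne : c.support.tail ≠ [] := by
    have := hc.three_le_length
    rw [← List.length_pos_iff, List.length_tail, c.length_support]
    omega
  have hsplit : c.support.tail.dropLast ++ [u] = c.support.tail := by
    simpa [List.getLast_tail, c.getLast_support] using List.dropLast_append_getLast hne
  refine ⟨c.support.tail.dropLast, c.isChain_adj_support.tail.dropLast,
    hc.support_nodup.sublist (List.dropLast_sublist _), fun hu => ?_, ?_,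
    (List.dropLast_sublist _).trans (List.tail_sublist _)⟩
  · have := hc.support_nodup
    rw [← hsplit] at this
    exact (List.nodup_append.mp this).2.2 u hu u (by simp) rfl
  · have := congrArg List.length hsplit
    simp only [List.length_append, List.length_singleton, List.length_tail,
      c.length_support] at this
    omega

theorem SimpleGraph.Walk.IsCycle.exists_path_omitting {V : Type*} {G : SimpleGraph V}
    {u : V} {c : G.Walk u u} (hc : c.IsCycle) (v : V) :
    ∃ l : List V, l.IsChain G.Adj ∧ l.Nodup ∧ v ∉ l ∧ l.length + 1 = c.length := by
  classical
  by_cases hv : v ∈ c.support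
  · obtain ⟨l, hl, hnd, hvl, hlen, -⟩ := (hc.rotate hv).exists_path_omitting_base
    exact ⟨l, hl, hnd, hvl, by simpa using hlen⟩
  · obtain ⟨l, hl, hnd, -, hlen, hsub⟩ := hc.exists_path_omitting_base
    exact ⟨l, hl, hnd, fun h => hv (hsub.subset h), hlen⟩

theorem PathVertsLE.noLongCycle_graphJoin {α W : Type*} [Unique α] (G : SimpleGraph α)
    {H : SimpleGraph W} {k : ℕ} (hH : PathVertsLE H k) : NoLongCycle (graphJoin G H) (k + 2) := by
  rintro ⟨u, c, hc, hlen⟩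
  obtain ⟨l, hl, hnd, hv, hlen'⟩ := hc.exists_path_omitting (Sum.inl default)
  have hlk : l.length ≤ k := by
    refine hH.length_le_of_forall_mem_range (f := Sum.inr) (fun _ _ h => h) hl hnd ?_
    rintro (a | b) hx
    · exact absurd (Unique.eq_default a ▸ hx) hv
    · exact Set.mem_range_self b
  omega

theorem SimpleGraph.Subgraph.IsMatching.ncard_verts_le {V : Type*} [Finite V]
    {G : SimpleGraph V} {M : G.Subgraph} (hM : M.IsMatching) {I S : Set V}
    (hIS : ∀ v ∈ I, ∀ w, G.Adj v w → w ∈ S) :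
    M.verts.ncard ≤ Iᶜ.ncard + S.ncard := by
  choose! partner hpartner using fun v (hv : v ∈ M.verts) => (hM hv).exists
  have hI : (M.verts ∩ I).ncard ≤ S.ncard :=
    Set.ncard_le_ncard_of_injOn partner (fun v hv => hIS v hv.2 _ (M.adj_sub (hpartner v hv.1)))
      fun v hv w hw h => hM.eq_of_adj_right (hpartner v hv.1) (h ▸ hpartner w hw.1)
  have hIc : (M.verts \ I).ncard ≤ Iᶜ.ncard := Set.ncard_le_ncard (Set.sdiff_subset_compl _ _)
  rw [← Set.ncard_inter_add_ncard_sdiff_eq_ncard M.verts I]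
  omega

theorem SimpleGraph.Subgraph.IsMatching.ncard_verts_le_graphJoin {α β ι γ : Type*}
    [Fintype α] [Fintype β] [Fintype ι] [Fintype γ] {A : SimpleGraph α} {B : SimpleGraph β}
    {C : SimpleGraph γ} {M : (graphJoin A (graphJoin B (⊥ : SimpleGraph ι) ⊕g C)).Subgraph}
    (hM : M.IsMatching) :
    M.verts.ncard ≤ 2 * (Fintype.card α + Fintype.card β) + Fintype.card γ := by
  set I := Set.range fun i : ι => (Sum.inr (Sum.inl (Sum.inr i)) : α ⊕ ((β ⊕ ι) ⊕ γ))
  set S := Set.range (Sum.elim Sum.inl fun b => Sum.inr (Sum.inl (Sum.inl b)) :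
    α ⊕ β → α ⊕ ((β ⊕ ι) ⊕ γ))
  have hI : I.ncard + Iᶜ.ncard = Nat.card (α ⊕ ((β ⊕ ι) ⊕ γ)) :=
    Set.ncard_add_ncard_compl I
  have hS : S.ncard = Fintype.card α + Fintype.card β := by
    rw [Set.ncard_range_of_injective (by rintro (_ | _) (_ | _) <;> simp)]
    simp
  have := hM.ncard_verts_le (I := I) (S := S) <| by
    rintro _ ⟨i, rfl⟩ (a | (b | j) | z) h
    · exact ⟨Sum.inl a, rfl⟩
    · exact ⟨Sum.inr b, rfl⟩
    all_goals simp [graphJoin] at h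
  rw [Set.ncard_range_of_injective (by intro _ _; simp)] at hI
  simp only [Nat.card_eq_fintype_card, Fintype.card_sum] at hI
  omega

theorem noLongCycle_graphJoin_apex {p : ℕ} {ι γ : Type*} {C : SimpleGraph γ} (hp : 2 ≤ p)
    (hC : PathVertsLE C (2 * p - 2)) :
    NoLongCycle (graphJoin (⊤ : SimpleGraph (Fin 1))
      (graphJoin (⊤ : SimpleGraph (Fin (p - 2))) (⊥ : SimpleGraph ι) ⊕g C)) (2 * p) := by
  have hpath := ((pathVertsLE_graphJoin_bot (⊤ : SimpleGraph (Fin (p - 2))) ι).sum hC).mono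
    (m := 2 * p - 2) (by simp only [Fintype.card_fin, max_le_iff]; omega)
  rw [show 2 * p = 2 * p - 2 + 2 by omega]
  exact hpath.noLongCycle_graphJoin ⊤

theorem stmt_9 (p s c d : ℕ) (hp : 3 ≤ p) (hs : p ≤ s)
    (hcd : s - p + 1 = c * (p - 1) + d) (hd : d ≤ p - 2) :
    ∃ N : ℕ, ∀ n : ℕ, N ≤ n →
      (d = 0 →
        NoLongCycle (G4zero p c n) (2 * p) ∧ NoMatchingOfSize (G4zero p c n) (s + 1)) ∧
      (d ≠ 0 →
        NoLongCycle (G4pos p c d n) (2 * p) ∧ NoMatchingOfSize (G4pos p c d n) (s + 1)) := by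
  have hcliques : PathVertsLE (multiK c (2 * p - 2)) (2 * p - 2) := pathVertsLE_multiK c _
  have hK : PathVertsLE (⊤ : SimpleGraph (Fin (2 * d + 1))) (2 * p - 2) :=
    (pathVertsLE_card _).mono (by simp only [Fintype.card_fin]; omega)
  have hcliqueVerts : c * (2 * p - 2) = 2 * (c * (p - 1)) := by
    rw [show 2 * p - 2 = 2 * (p - 1) by omega]
    ring
  refine ⟨0, fun n _ =>
    ⟨fun _ => ⟨noLongCycle_graphJoin_apex (by omega) hcliques, fun M hM => ?_⟩,
      fun _ => ⟨noLongCycle_graphJoin_apex (by omega) ((hcliques.sum hK).mono (max_self _).le),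
        fun M hM => ?_⟩⟩⟩
  · have := hM.ncard_verts_le_graphJoin
    simp only [Fintype.card_fin, Fintype.card_prod] at this
    omega
  · have := hM.ncard_verts_le_graphJoin
    simp only [Fintype.card_fin, Fintype.card_prod, Fintype.card_sum] at this
    omega
end

section
/- Let p ≥ 3, s ≥ p, c = ⌊(s−p+1)/(p−1)⌋ and suppose d := s−p+1−c(p−1) satisfies 1 ≤ d ≤ p−2. For sufficiently large n, the graph G_6 = K_1 ∨ ((K_{p−2} ∨ (K_2 ∪ I_{n−p−1−c(2p−2)})) ∪ c·K_{2p−2}) contains no cycle of length at least 2p and no matching of size s+1. -/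
/-- `G₆ = K₁ ∨ ((K_{p-2} ∨ (K₂ ∪ I_{n-p-1-c(2p-2)})) ∪ c K_{2p-2})`. -/
def G6 (p c n : ℕ) :
    SimpleGraph (Fin 1 ⊕ ((Fin (p - 2) ⊕ (Fin 2 ⊕ Fin (n - p - 1 - c * (2 * p - 2)))) ⊕
      (Fin c × Fin (2 * p - 2)))) :=
  graphJoin (⊤ : SimpleGraph (Fin 1))
    ((graphJoin (⊤ : SimpleGraph (Fin (p - 2)))
        ((⊤ : SimpleGraph (Fin 2)) ⊕g (⊥ : SimpleGraph (Fin (n - p - 1 - c * (2 * p - 2)))))) ⊕g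
      (multiK c (2 * p - 2)))

/-
The apex `K₁` is a cut vertex isolating each copy of `K_{2p-2}`, so a cycle meeting a copy stays
inside it together with the apex and has at most `2p - 1` vertices. Every other edge meets the
`p - 1` vertices of `K₁ ∨ K_{p-2}`, except the one edge of `K₂`; a cycle uses at most two edges at
each vertex, so such a cycle has length at most `2(p - 1) + 1`. In a matching, the partners of the
matched vertices of the independent set are distinct vertices of `K₁ ∨ K_{p-2}`, so a matching
covers at most `(p - 1) + (p + 1) + c(2p - 2) = 2(p + c(p - 1)) ≤ 2s` vertices.
-/

open Finset

namespace SimpleGraph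

variable {V : Type*} {G : SimpleGraph V}

namespace Walk

variable {u : V}

lemma IsCycle.ncard_neighborSet_toSubgraph_le_two {c : G.Walk u u} (hc : c.IsCycle) (v : V) :
    (c.toSubgraph.neighborSet v).ncard ≤ 2 := by
  by_cases hv : v ∈ c.support
  · exact (hc.ncard_neighborSet_toSubgraph_eq_two hv).le
  · rw [Set.eq_empty_of_forall_notMem (s := c.toSubgraph.neighborSet v)
      fun w (hw : c.toSubgraph.Adj v w) => hv (c.mem_verts_toSubgraph.mp hw.fst_mem)]
    simp

lemma IsCycle.card_filter_mem_edges_le_two [DecidableEq V] {c : G.Walk u u} (hc : c.IsCycle)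
    (v : V) : #{e ∈ c.edges.toFinset | v ∈ e} ≤ 2 := by
  have hfin := c.finite_neighborSet_toSubgraph (w := v)
  calc #{e ∈ c.edges.toFinset | v ∈ e}
      ≤ #(hfin.toFinset.image (s(v, ·))) := by
        refine card_le_card fun e he => ?_
        obtain ⟨he, hve⟩ := mem_filter.mp he
        obtain ⟨w, rfl⟩ := Sym2.mem_iff_exists.mp hve
        refine mem_image_of_mem _ (hfin.mem_toFinset.mpr ?_)
        exact c.mem_edges_toSubgraph.mpr (List.mem_toFinset.mp he)
    _ ≤ #hfin.toFinset := card_image_le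
    _ = (c.toSubgraph.neighborSet v).ncard := (Set.ncard_eq_toFinset_card _ hfin).symm
    _ ≤ 2 := hc.ncard_neighborSet_toSubgraph_le_two v

lemma IsCycle.length_le_of_forall_mem_edges [DecidableEq V] {c : G.Walk u u} (hc : c.IsCycle)
    (T : Finset V) (F : Finset (Sym2 V)) (h : ∀ e ∈ c.edges, (∃ v ∈ T, v ∈ e) ∨ e ∈ F) :
    c.length ≤ 2 * #T + #F := by
  calc c.length = #c.edges.toFinset := by
        rw [List.toFinset_card_of_nodup hc.edges_nodup, length_edges]
    _ ≤ #(T.biUnion (fun v => {e ∈ c.edges.toFinset | v ∈ e}) ∪ F) := by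
        refine card_le_card fun e he => ?_
        rcases h e (List.mem_toFinset.mp he) with ⟨v, hv, hve⟩ | hF
        · exact mem_union_left _ (mem_biUnion.mpr ⟨v, hv, mem_filter.mpr ⟨he, hve⟩⟩)
        · exact mem_union_right _ hF
    _ ≤ ∑ v ∈ T, #{e ∈ c.edges.toFinset | v ∈ e} + #F :=
        (card_union_le _ _).trans (Nat.add_le_add_right card_biUnion_le _)
    _ ≤ ∑ _v ∈ T, 2 + #F := by gcongr with v; exact hc.card_filter_mem_edges_le_two v
    _ = 2 * #T + #F := by rw [sum_const, smul_eq_mul, mul_comm]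

lemma IsCycle.length_le_card_of_support_subset [DecidableEq V] {c : G.Walk u u}
    (hc : c.IsCycle) {B : Finset V} (h : ∀ v ∈ c.support, v ∈ B) : c.length ≤ #B :=
  calc c.length = #c.support.tail.toFinset := by
        rw [List.toFinset_card_of_nodup hc.support_nodup, List.length_tail, length_support]; rfl
    _ ≤ #B := card_le_card fun v hv => h v (List.mem_of_mem_tail (List.mem_toFinset.mp hv))

lemma IsTrail.exists_ne_edges_of_start_mem {c : G.Walk u u} (hc : c.IsTrail) {A : Set V}
    (hu : u ∈ A) {y : V} (hy : y ∈ c.support) (hyA : y ∉ A) :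
    ∃ a₁ b₁ a₂ b₂, a₁ ∈ A ∧ b₁ ∉ A ∧ a₂ ∈ A ∧ b₂ ∉ A ∧
      s(a₁, b₁) ∈ c.edges ∧ s(a₂, b₂) ∈ c.edges ∧ s(a₁, b₁) ≠ s(a₂, b₂) := by
  classical
  obtain ⟨d₁, hd₁, hd₁A, hd₁A'⟩ := (c.takeUntil y hy).exists_boundary_dart A hu hyA
  obtain ⟨d₂, hd₂, hd₂A, hd₂A'⟩ :=
    (c.dropUntil y hy).exists_boundary_dart Aᶜ hyA (Set.notMem_compl_iff.mpr hu)
  have he₁ : d₁.edge ∈ (c.takeUntil y hy).edges := List.mem_map_of_mem hd₁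
  have he₂ : d₂.edge ∈ (c.dropUntil y hy).edges := List.mem_map_of_mem hd₂
  have hnodup : ((c.takeUntil y hy).edges ++ (c.dropUntil y hy).edges).Nodup := by
    rw [← edges_append, c.take_spec hy]; exact hc.edges_nodup
  refine ⟨d₁.fst, d₁.snd, d₂.snd, d₂.fst, hd₁A, hd₁A', Set.notMem_compl_iff.mp hd₂A', hd₂A,
    c.edges_takeUntil_subset_edges hy he₁, ?_, ?_⟩
  · rw [Sym2.eq_swap]; exact c.edges_dropUntil_subset_edges hy he₂
  · intro h
    have : d₁.edge = d₂.edge := h.trans Sym2.eq_swap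
    exact List.disjoint_of_nodup_append hnodup he₁ (this ▸ he₂)

lemma IsTrail.exists_ne_edges_of_mem_of_notMem {c : G.Walk u u} (hc : c.IsTrail) {A : Set V}
    {x y : V} (hx : x ∈ c.support) (hxA : x ∈ A) (hy : y ∈ c.support) (hyA : y ∉ A) :
    ∃ a₁ b₁ a₂ b₂, a₁ ∈ A ∧ b₁ ∉ A ∧ a₂ ∈ A ∧ b₂ ∉ A ∧
      s(a₁, b₁) ∈ c.edges ∧ s(a₂, b₂) ∈ c.edges ∧ s(a₁, b₁) ≠ s(a₂, b₂) := by
  by_cases hu : u ∈ A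
  · exact hc.exists_ne_edges_of_start_mem hu hy hyA
  · obtain ⟨a₁, b₁, a₂, b₂, ha₁, hb₁, ha₂, hb₂, he₁, he₂, hne⟩ :=
      hc.exists_ne_edges_of_start_mem (A := Aᶜ) hu hx (Set.notMem_compl_iff.mpr hxA)
    refine ⟨b₁, a₁, b₂, a₂, Set.notMem_compl_iff.mp hb₁, ha₁, Set.notMem_compl_iff.mp hb₂, ha₂,
      Sym2.eq_swap ▸ he₁, Sym2.eq_swap ▸ he₂, ?_⟩
    rwa [Sym2.eq_swap, @Sym2.eq_swap _ b₂]

/-- A cycle through `A` leaving `A ∪ {z}` would cross the boundary of `A` twice and that of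
`A ∪ {z}` once, giving three cycle edges at `z`. -/
lemma IsCycle.mem_insert_of_neighborSet_subset {c : G.Walk u u} (hc : c.IsCycle) {A : Set V}
    {z : V} (hA : ∀ a ∈ A, G.neighborSet a ⊆ insert z A) {x : V} (hx : x ∈ c.support)
    (hxA : x ∈ A) : ∀ y ∈ c.support, y ∈ insert z A := by
  classical
  intro y hy
  by_contra hyzA
  have hexit : ∀ {a b}, a ∈ A → s(a, b) ∈ c.edges → b ∈ insert z A := fun ha he =>
    hA _ ha (c.adj_of_mem_edges he)
  obtain ⟨a₁, b₁, a₂, b₂, ha₁, hb₁, ha₂, hb₂, he₁, he₂, hne₁₂⟩ :=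
    hc.isTrail.exists_ne_edges_of_mem_of_notMem hx hxA hy (fun h => hyzA (Or.inr h))
  obtain rfl : b₁ = z := (hexit ha₁ he₁).resolve_right hb₁
  obtain rfl : b₂ = b₁ := (hexit ha₂ he₂).resolve_right hb₂
  obtain ⟨a₃, b₃, -, -, ha₃, hb₃, -, -, he₃, -⟩ :=
    hc.isTrail.exists_ne_edges_of_mem_of_notMem hx (Set.mem_insert_of_mem b₂ hxA) hy hyzA
  obtain rfl : a₃ = b₂ := ha₃.resolve_right fun h => hb₃ (hexit h he₃)
  have hne : ∀ a ∈ A, s(a, a₃) ≠ s(a₃, b₃) := fun a ha h => by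
    rcases Sym2.eq_iff.mp h with ⟨-, rfl⟩ | ⟨rfl, -⟩
    · exact hb₃ (Set.mem_insert _ _)
    · exact hb₃ (Set.mem_insert_of_mem _ ha)
  have hsub : {s(a₁, a₃), s(a₂, a₃), s(a₃, b₃)} ⊆ {e ∈ c.edges.toFinset | a₃ ∈ e} := by
    simp [insert_subset_iff, he₁, he₂, he₃]
  have := (card_le_card hsub).trans (hc.card_filter_mem_edges_le_two a₃)
  rw [card_eq_three.mpr ⟨_, _, _, hne₁₂, hne a₁ ha₁, hne a₂ ha₂, rfl⟩] at this
  omega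

end Walk

lemma Subgraph.IsMatching.ncard_verts_le_s19 [Finite V] {M : G.Subgraph} (hM : M.IsMatching)
    {I H : Set V} (hI : ∀ x ∈ I, G.neighborSet x ⊆ H) : M.verts.ncard ≤ H.ncard + Iᶜ.ncard := by
  choose! partner hpartner using fun v (hv : v ∈ M.verts) => (hM hv).exists
  have hIH : (M.verts ∩ I).ncard ≤ H.ncard :=
    Set.ncard_le_ncard_of_injOn partner
      (fun v hv => hI v hv.2 (M.adj_sub (hpartner v hv.1)))
      (fun v₁ hv₁ v₂ hv₂ h => hM.eq_of_adj_right (hpartner v₁ hv₁.1) (h ▸ hpartner v₂ hv₂.1))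
  have hIc : (M.verts \ I).ncard ≤ Iᶜ.ncard := Set.ncard_le_ncard (Set.sdiff_subset_compl _ _)
  rw [← Set.ncard_inter_add_ncard_sdiff_eq_ncard M.verts I]
  omega

end SimpleGraph

open SimpleGraph

namespace G6

variable {p c n : ℕ}

local notation "V₆" => Fin 1 ⊕ ((Fin (p - 2) ⊕ (Fin 2 ⊕ Fin (n - p - 1 - c * (2 * p - 2)))) ⊕
  (Fin c × Fin (2 * p - 2)))

variable (p c n) in
/-- The apex `K₁` together with the clique `K_{p-2}`. -/
def hub : Finset V₆ := univ.image (Sum.map id fun a => Sum.inl (Sum.inl a))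

variable (p c n) in
def k₂Edge : Sym2 V₆ :=
  s(Sum.inr (Sum.inl (Sum.inr (Sum.inl 0))), Sum.inr (Sum.inl (Sum.inr (Sum.inl 1))))

lemma card_hub_le (hp : 2 ≤ p) : #(hub p c n) ≤ p - 1 :=
  card_image_le.trans (by
    simp only [card_univ, Fintype.card_sum, Fintype.card_unique, Fintype.card_fin]; omega)

lemma neighborSet_indep_subset (x : Fin (n - p - 1 - c * (2 * p - 2))) :
    (G6 p c n).neighborSet (Sum.inr (Sum.inl (Sum.inr (Sum.inr x)))) ⊆ hub p c n := by
  rintro (a | (b | (b | b)) | b) h <;> simp_all [G6, graphJoin, hub]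

lemma neighborSet_block_subset (j : Fin c) (i : Fin (2 * p - 2)) :
    (G6 p c n).neighborSet (Sum.inr (Sum.inr (j, i))) ⊆
      insert (Sum.inl 0) (Set.range fun i' => Sum.inr (Sum.inr (j, i'))) := by
  rintro (a | (b | (b | b)) | ⟨j', i'⟩) h <;>
    simp_all [G6, graphJoin, multiK, Fin.fin_one_eq_zero]

lemma mem_hub_or_eq_k₂Edge {x y : V₆} (h : (G6 p c n).Adj x y)
    (hx : ∀ b, x ≠ Sum.inr (Sum.inr b)) (hy : ∀ b, y ≠ Sum.inr (Sum.inr b)) :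
    x ∈ hub p c n ∨ y ∈ hub p c n ∨ s(x, y) = k₂Edge p c n := by
  rcases x with a | (a | x) | a
  · simp [hub]
  · simp [hub]
  · rcases y with b | (b | y) | b
    · simp [hub]
    · simp [hub]
    · right; right
      rcases x with a | a <;> rcases y with b | b <;>
        simp only [G6, graphJoin, top_adj, ne_eq, sum_adj, bot_adj] at h
      obtain ⟨rfl, rfl⟩ | ⟨rfl, rfl⟩ : (a = 0 ∧ b = 1) ∨ (a = 1 ∧ b = 0) := by omega
      · rfl
      · exact Sym2.eq_swap
    · exact absurd rfl (hy b)
  · exact absurd rfl (hx a)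

lemma length_le_of_isCycle_of_mem_support_block {u : V₆} {w : (G6 p c n).Walk u u}
    (hw : w.IsCycle) {j : Fin c} {i : Fin (2 * p - 2)} (h : Sum.inr (Sum.inr (j, i)) ∈ w.support) :
    w.length ≤ 2 * p - 1 := by
  classical
  have hsupp := hw.mem_insert_of_neighborSet_subset (z := Sum.inl 0)
    (A := Set.range fun i' => Sum.inr (Sum.inr (j, i')))
    (by rintro _ ⟨i', rfl⟩; exact neighborSet_block_subset j i') h ⟨i, rfl⟩
  calc w.length
      ≤ #(insert (Sum.inl 0) (univ.image fun i' => Sum.inr (Sum.inr (j, i')))) :=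
        hw.length_le_card_of_support_subset fun v hv => by simpa using hsupp v hv
    _ ≤ #(univ : Finset (Fin (2 * p - 2))) + 1 :=
        (card_insert_le _ _).trans (by gcongr; exact card_image_le)
    _ ≤ 2 * p - 1 := by rw [card_univ, Fintype.card_fin]; have := i.pos; omega

lemma length_le_of_isCycle_of_forall_block_notMem_support (hp : 2 ≤ p) {u : V₆}
    {w : (G6 p c n).Walk u u} (hw : w.IsCycle)
    (h : ∀ b, Sum.inr (Sum.inr b) ∉ w.support) : w.length ≤ 2 * p - 1 := by
  classical
  calc w.length ≤ 2 * #(hub p c n) + #{k₂Edge p c n} :=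
        hw.length_le_of_forall_mem_edges _ _ fun e he => ?_
    _ ≤ 2 * p - 1 := by have := card_hub_le (c := c) (n := n) hp; rw [card_singleton]; omega
  induction e using Sym2.ind with
  | _ x y =>
  have hx : ∀ b, x ≠ Sum.inr (Sum.inr b) := fun b hb =>
    h b (hb ▸ w.fst_mem_support_of_mem_edges he)
  have hy : ∀ b, y ≠ Sum.inr (Sum.inr b) := fun b hb =>
    h b (hb ▸ w.snd_mem_support_of_mem_edges he)
  rcases mem_hub_or_eq_k₂Edge (w.adj_of_mem_edges he) hx hy with hx | hy | hk
  · exact Or.inl ⟨x, hx, Sym2.mem_mk_left x y⟩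
  · exact Or.inl ⟨y, hy, Sym2.mem_mk_right x y⟩
  · exact Or.inr (mem_singleton.mpr hk)

theorem noLongCycle (hp : 2 ≤ p) : NoLongCycle (G6 p c n) (2 * p) := by
  rintro ⟨u, w, hw, hlen⟩
  have : w.length ≤ 2 * p - 1 := by
    by_cases h : ∃ b, Sum.inr (Sum.inr b) ∈ w.support
    · obtain ⟨⟨j, i⟩, hb⟩ := h
      exact length_le_of_isCycle_of_mem_support_block hw hb
    · exact length_le_of_isCycle_of_forall_block_notMem_support hp hw (not_exists.mp h)
  omega

theorem noMatchingOfSize {s : ℕ} (hp : 2 ≤ p) (hs : p + c * (p - 1) ≤ s) :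
    NoMatchingOfSize (G6 p c n) (s + 1) := by
  intro M hM
  have hM := hM.ncard_verts_le_s19 (H := hub p c n)
    (I := Set.range fun x => Sum.inr (Sum.inl (Sum.inr (Sum.inr x))))
    (by rintro _ ⟨x, rfl⟩; exact neighborSet_indep_subset x)
  rw [Set.ncard_coe_finset, Set.ncard_compl,
    Set.ncard_range_of_injective (fun a b h => by simpa using h)] at hM
  simp only [Nat.card_eq_fintype_card, Fintype.card_sum, Fintype.card_unique, Fintype.card_fin,
    Fintype.card_prod] at hM
  have := card_hub_le (c := c) (n := n) hp
  have : c * (2 * p - 2) = 2 * (c * (p - 1)) := by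
    rw [show 2 * p - 2 = 2 * (p - 1) by omega]; ring
  omega

end G6

theorem stmt_19_general (p s c d : ℕ) (hp : 3 ≤ p) (hs : p ≤ s)
    (hd : d = s - p + 1 - c * (p - 1)) (hd1 : 1 ≤ d) :
    ∃ N : ℕ, ∀ n : ℕ, N ≤ n →
      NoLongCycle (G6 p c n) (2 * p) ∧ NoMatchingOfSize (G6 p c n) (s + 1) :=
  ⟨0, fun _ _ => ⟨G6.noLongCycle (by omega), G6.noMatchingOfSize (by omega) (by omega)⟩⟩

theorem stmt_19 (p s c d : ℕ) (hp : 3 ≤ p) (hs : p ≤ s)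
    (hc : c = (s - p + 1) / (p - 1)) (hd : d = s - p + 1 - c * (p - 1))
    (hd1 : 1 ≤ d) (hd2 : d ≤ p - 2) :
    ∃ N : ℕ, ∀ n : ℕ, N ≤ n →
      NoLongCycle (G6 p c n) (2 * p) ∧ NoMatchingOfSize (G6 p c n) (s + 1) :=
  stmt_19_general p s c d hp hs hd hd1
end
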